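/- arXiv:1707.05083 — 3 statements merged into one kernel-verified Lean document; each statement's English description precedes it below -/
import Mathlib

section
/- The characteristic polynomial of the adjacency matrix of Γ(Z/p^3 Z) equals ±λ^(p^2 - 3) · (λ^2 − (p−1)λ − (p^2 − p)(p−1)). -/
/-!
The vertices of `Γ(ZMod (p ^ 3))` are the nonzero multiples of `p`, and two of them multiply to
zero iff one of them is a multiple of `p ^ 2`. With `b` the indicator of the `p - 1` multiples of
`p ^ 2`, the adjacency matrix is therefore `1 bᵀ + b (1 - b)ᵀ`. A matrix `A B` of rank two has
characteristic polynomial `X ^ (n - 2)` times that of the `2 × 2` matrix `B A`, which here is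
`!![p - 1, p - 1; p ^ 2 - p, 0]`.
-/

open scoped Classical
open Polynomial

/-- Adjacency matrix of the zero divisor graph of `ZMod n` (with diagonal entry `1` at
self-annihilating vertices): `M x y = 1` iff `x * y = 0`. -/
noncomputable def zdAdjMatrix (n : ℕ) :
    Matrix {x : ZMod n // x ≠ 0 ∧ ∃ y ≠ 0, x * y = 0}
      {x : ZMod n // x ≠ 0 ∧ ∃ y ≠ 0, x * y = 0} ℝ :=
  fun x y => if (x : ZMod n) * (y : ZMod n) = 0 then 1 else 0

open Matrix

namespace Matrix

variable {m R : Type*} [Fintype m] [DecidableEq m] [CommRing R]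

theorem charpoly_vecMulVec_add_vecMulVec (a b c d : m → R) (h : 2 ≤ Fintype.card m) :
    (vecMulVec a b + vecMulVec c d).charpoly =
      X ^ (Fintype.card m - 2) * !![b ⬝ᵥ a, b ⬝ᵥ c; d ⬝ᵥ a, d ⬝ᵥ c].charpoly := by
  have hAB : vecMulVec a b + vecMulVec c d = of (fun i => ![a i, c i]) * of ![b, d] := by
    ext i j
    simp [mul_apply, Fin.sum_univ_two, vecMulVec_apply]
  have hBA : of ![b, d] * of (fun i => ![a i, c i]) = !![b ⬝ᵥ a, b ⬝ᵥ c; d ⬝ᵥ a, d ⬝ᵥ c] := by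
    ext i j
    fin_cases i <;> fin_cases j <;> simp [mul_apply, dotProduct]
  rw [hAB, charpoly_mul_comm_of_le _ _ (by simpa using h), hBA, Fintype.card_fin]

end Matrix

namespace ZMod

theorem mul_eq_zero_iff_dvd_val_mul {n : ℕ} [NeZero n] (x y : ZMod n) :
    x * y = 0 ↔ n ∣ x.val * y.val := by
  rw [← natCast_eq_zero_iff, Nat.cast_mul, natCast_zmod_val, natCast_zmod_val]

theorem card_ne_zero_dvd_val {n : ℕ} [NeZero n] {d : ℕ} (hd : d ∣ n) :
    Fintype.card {x : ZMod n // x ≠ 0 ∧ d ∣ x.val} = n / d - 1 := by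
  obtain ⟨e, rfl⟩ := hd
  have hde : 0 < d * e := NeZero.pos _
  have hrange : Finset.card {x : ZMod (d * e) | x ≠ 0 ∧ d ∣ x.val} =
      Finset.card {k ∈ Finset.range (d * e - 1).succ | k ≠ 0 ∧ d ∣ k} := by
    rw [Nat.succ_eq_add_one, Nat.sub_add_cancel hde]
    refine Finset.card_nbij' val (fun k => (k : ZMod (d * e))) ?_ ?_ ?_ ?_ <;> intro x hx
    · simp_all [val_lt]
    · simp only [Finset.coe_filter, Finset.mem_range, Finset.mem_univ, true_and,
        Set.mem_ofPred_eq] at hx ⊢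
      rw [val_natCast, Nat.mod_eq_of_lt hx.1, Ne, natCast_eq_zero_iff]
      exact ⟨fun h => hx.2.1 (Nat.eq_zero_of_dvd_of_lt h hx.1), hx.2.2⟩
    · simp
    · simp_all [val_natCast, Nat.mod_eq_of_lt]
  rw [Fintype.card_subtype, hrange, Nat.card_multiples',
    Nat.mul_div_cancel_left e (Nat.pos_of_mul_pos_right hde)]
  simpa using Nat.mul_sub_div 0 d e hde

variable {p : ℕ} [hp : Fact p.Prime]

theorem exists_ne_zero_mul_eq_zero_iff_dvd_val {k : ℕ} (hk : k ≠ 0) (x : ZMod (p ^ k)) :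
    (∃ y ≠ 0, x * y = 0) ↔ p ∣ x.val := by
  constructor
  · rintro ⟨y, hy, hxy⟩
    by_contra h
    have hx : IsUnit x := by
      rw [← natCast_zmod_val x]
      exact (isUnit_natCast_iff_not_dvd_pow hp.out (Nat.pos_of_ne_zero hk)).2 h
    exact hy (hx.mul_right_eq_zero.1 hxy)
  · rintro ⟨a, ha⟩
    refine ⟨((p ^ (k - 1) : ℕ) : ZMod (p ^ k)), ?_, ?_⟩
    · rw [Ne, natCast_eq_zero_iff, Nat.pow_dvd_pow_iff_le_right hp.out.one_lt]
      omega
    · rw [← natCast_zmod_val x, ha, ← Nat.cast_mul, natCast_eq_zero_iff, mul_right_comm,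
        ← pow_succ', Nat.sub_add_cancel (Nat.one_le_iff_ne_zero.2 hk)]
      exact Dvd.intro a rfl

theorem mul_eq_zero_iff_sq_dvd_val {x y : ZMod (p ^ 3)} (hx : p ∣ x.val) (hy : p ∣ y.val) :
    x * y = 0 ↔ p ^ 2 ∣ x.val ∨ p ^ 2 ∣ y.val := by
  obtain ⟨a, ha⟩ := hx
  obtain ⟨b, hb⟩ := hy
  have hp0 := hp.out.pos
  rw [mul_eq_zero_iff_dvd_val_mul, ha, hb, show p * a * (p * b) = p ^ 2 * (a * b) by ring,
    pow_succ, Nat.mul_dvd_mul_iff_left (by positivity), sq, Nat.mul_dvd_mul_iff_left hp0,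
    Nat.mul_dvd_mul_iff_left hp0, hp.out.dvd_mul]

end ZMod

abbrev ZDVertex (n : ℕ) := {x : ZMod n // x ≠ 0 ∧ ∃ y ≠ 0, x * y = 0}

section PrimePower

variable {p : ℕ} [hp : Fact p.Prime] {k : ℕ}

theorem dvd_val_of_zdVertex (hk : k ≠ 0) (x : ZDVertex (p ^ k)) : p ∣ (x : ZMod (p ^ k)).val :=
  (ZMod.exists_ne_zero_mul_eq_zero_iff_dvd_val hk _).1 x.2.2

theorem card_zdVertex (hk : k ≠ 0) : Fintype.card (ZDVertex (p ^ k)) = p ^ (k - 1) - 1 := by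
  rw [Fintype.card_congr (Equiv.subtypeEquivRight fun x => and_congr_right fun _ =>
      ZMod.exists_ne_zero_mul_eq_zero_iff_dvd_val hk x),
    ZMod.card_ne_zero_dvd_val (dvd_pow_self p hk), Nat.div_eq_of_eq_mul_left hp.out.pos
      (by rw [← pow_succ, Nat.sub_add_cancel (Nat.one_le_iff_ne_zero.2 hk)])]

end PrimePower

section PrimeCube

variable (p : ℕ) [hp : Fact p.Prime]

noncomputable def sqDvdIndicator : ZDVertex (p ^ 3) → ℝ :=
  fun x => if p ^ 2 ∣ (x : ZMod (p ^ 3)).val then 1 else 0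

variable {p}

theorem zdAdjMatrix_eq_vecMulVec :
    zdAdjMatrix (p ^ 3) = vecMulVec 1 (sqDvdIndicator p) +
      vecMulVec (sqDvdIndicator p) (1 - sqDvdIndicator p) := by
  ext x y
  simp only [zdAdjMatrix, sqDvdIndicator, Matrix.add_apply, vecMulVec_apply, Pi.one_apply,
    Pi.sub_apply, ZMod.mul_eq_zero_iff_sq_dvd_val (dvd_val_of_zdVertex three_ne_zero x)
      (dvd_val_of_zdVertex three_ne_zero y)]
  split_ifs <;> simp_all

theorem sum_sqDvdIndicator : ∑ x, sqDvdIndicator p x = (p : ℝ) - 1 := by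
  have hvertex : ∀ x : ZMod (p ^ 3),
      ((x ≠ 0 ∧ ∃ y ≠ 0, x * y = 0) ∧ p ^ 2 ∣ x.val) ↔ (x ≠ 0 ∧ p ^ 2 ∣ x.val) := fun x => by
    rw [ZMod.exists_ne_zero_mul_eq_zero_iff_dvd_val three_ne_zero]
    exact ⟨fun h => ⟨h.1.1, h.2⟩, fun h => ⟨⟨h.1, (dvd_pow_self p two_ne_zero).trans h.2⟩, h.2⟩⟩
  unfold sqDvdIndicator
  rw [Finset.sum_boole, ← Fintype.card_subtype,
    Fintype.card_congr ((Equiv.subtypeSubtypeEquivSubtypeInter _ _).trans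
      (Equiv.subtypeEquivRight hvertex)),
    ZMod.card_ne_zero_dvd_val (pow_dvd_pow p (by norm_num : 2 ≤ 3)),
    Nat.div_eq_of_eq_mul_left (pow_pos hp.out.pos 2) (pow_succ' p 2),
    Nat.cast_sub hp.out.one_le, Nat.cast_one]

theorem sqDvdIndicator_dotProduct_self :
    sqDvdIndicator p ⬝ᵥ sqDvdIndicator p = (p : ℝ) - 1 := by
  rw [← sum_sqDvdIndicator, dotProduct]
  refine Finset.sum_congr rfl fun x _ => ?_
  by_cases h : p ^ 2 ∣ (x : ZMod (p ^ 3)).val <;> simp [sqDvdIndicator, h]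

end PrimeCube

/-- The characteristic polynomial of the adjacency matrix of `Γ(ZMod (p^3))` equals
`± λ^(p^2-3) (λ^2 - (p-1)λ - (p^2-p)(p-1))`. -/
theorem charpoly_zd_graph_p_cubed (p : ℕ) [Fact p.Prime] :
    ∃ ε : ℝ, (ε = 1 ∨ ε = -1) ∧
      (zdAdjMatrix (p ^ 3)).charpoly =
        C ε * (X ^ (p ^ 2 - 3) *
          (X ^ 2 - C ((p : ℝ) - 1) * X - C (((p : ℝ) ^ 2 - p) * ((p : ℝ) - 1)))) := by
  have hp2 : 2 ^ 2 ≤ p ^ 2 := Nat.pow_le_pow_left (Fact.out : p.Prime).two_le 2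
  have hcard : Fintype.card (ZDVertex (p ^ 3)) = p ^ 2 - 1 := card_zdVertex three_ne_zero
  refine ⟨1, Or.inl rfl, ?_⟩
  rw [zdAdjMatrix_eq_vecMulVec, charpoly_vecMulVec_add_vecMulVec _ _ _ _ (by rw [hcard]; omega),
    charpoly_fin_two, trace_fin_two_of, det_fin_two_of, sub_dotProduct, sub_dotProduct,
    sqDvdIndicator_dotProduct_self, dotProduct_one, one_dotProduct, one_dotProduct_one,
    sum_sqDvdIndicator, hcard, show p ^ 2 - 1 - 2 = p ^ 2 - 3 by omega,
    Nat.cast_sub (by omega), Nat.cast_pow, Nat.cast_one]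
  simp only [map_sub, map_add, map_mul, map_pow, map_one, map_natCast]
  ring
end

section
/- Every nonzero eigenvalue λ of the adjacency matrix of the zero divisor graph Γ(Z/(p^2 q)Z) satisfies λ^4 − (p−1)λ^3 − 2p(p−1)(q−1)λ^2 + p(p−1)^2(q−1)λ + p(p−1)^3(q−1)^2 = 0. -/
open scoped Classical

open Finset

lemma zd_count_dvd (d m : ℕ) (h0 : 0 < d) :
    ((Finset.range (d * m)).filter (fun k => d ∣ k)).card = m := by
  have himg : (Finset.range (d * m)).filter (fun k => d ∣ k)
      = (Finset.range m).image (fun j => d * j) := by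
    ext k
    simp only [Finset.mem_filter, Finset.mem_range, Finset.mem_image]
    constructor
    · rintro ⟨hk, j, rfl⟩
      exact ⟨j, (mul_lt_mul_iff_right₀ h0).mp hk, rfl⟩
    · rintro ⟨j, hj, rfl⟩
      exact ⟨(mul_lt_mul_iff_right₀ h0).mpr hj, j, rfl⟩
  rw [himg, Finset.card_image_of_injective _ (mul_right_injective₀ h0.ne'),
    Finset.card_range]

lemma zd_card_filter_and_not {N : ℕ} {A B : ℕ → Prop} [DecidablePred A] [DecidablePred B]
    (h : ∀ k, B k → A k) :
    ((Finset.range N).filter (fun k => A k ∧ ¬ B k)).card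
      = ((Finset.range N).filter A).card - ((Finset.range N).filter B).card := by
  have hsub : (Finset.range N).filter B ⊆ (Finset.range N).filter A := by
    intro k hk
    simp only [Finset.mem_filter] at hk ⊢
    exact ⟨hk.1, h k hk.2⟩
  have hset : (Finset.range N).filter (fun k => A k ∧ ¬ B k)
      = (Finset.range N).filter A \ (Finset.range N).filter B := by
    ext k
    simp only [Finset.mem_filter, Finset.mem_sdiff]
    tauto
  rw [hset, Finset.card_sdiff_of_subset hsub]

lemma zd_cnt_p (p q : ℕ) (hp : p.Prime) :
    ((Finset.range (p^2*q)).filter (fun k => p ∣ k)).card = p * q := by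
  have h : p^2*q = p * (p*q) := by ring
  rw [h, zd_count_dvd _ _ hp.pos]

lemma zd_cnt_pp (p q : ℕ) (hp : p.Prime) :
    ((Finset.range (p^2*q)).filter (fun k => p^2 ∣ k)).card = q :=
  zd_count_dvd _ _ (by have := hp.pos; positivity)

lemma zd_cnt_q (p q : ℕ) (hq : q.Prime) :
    ((Finset.range (p^2*q)).filter (fun k => q ∣ k)).card = p^2 := by
  have h : (Finset.range (p^2*q)) = (Finset.range (q * p^2)) := by rw [mul_comm]
  rw [h, zd_count_dvd _ _ hq.pos]

lemma zd_cnt_pq (p q : ℕ) (hp : p.Prime) (hq : q.Prime) :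
    ((Finset.range (p^2*q)).filter (fun k => p*q ∣ k)).card = p := by
  have h : (Finset.range (p^2*q)) = (Finset.range ((p*q) * p)) := by
    congr 1; ring
  rw [h, zd_count_dvd _ _ (by have := hp.pos; have := hq.pos; positivity)]

lemma zd_cnt_ppq (p q : ℕ) (hp : p.Prime) (hq : q.Prime) :
    ((Finset.range (p^2*q)).filter (fun k => p^2*q ∣ k)).card = 1 := by
  have h : (Finset.range (p^2*q)) = (Finset.range ((p^2*q) * 1)) := by
    congr 1; ring
  rw [h, zd_count_dvd _ _ (by have := hp.pos; have := hq.pos; positivity)]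

lemma zd_pq_dvd {p q : ℕ} (hp : p.Prime) (hq : q.Prime) (hpq : p ≠ q) {k : ℕ}
    (h1 : p ∣ k) (h2 : q ∣ k) : p * q ∣ k :=
  Nat.Coprime.mul_dvd_of_dvd_of_dvd ((Nat.coprime_primes hp hq).mpr hpq) h1 h2

lemma zd_ppq_dvd {p q : ℕ} (hp : p.Prime) (hq : q.Prime) (hpq : p ≠ q) {k : ℕ}
    (h1 : p^2 ∣ k) (h2 : q ∣ k) : p^2 * q ∣ k :=
  Nat.Coprime.mul_dvd_of_dvd_of_dvd
    (Nat.Coprime.pow_left 2 ((Nat.coprime_primes hp hq).mpr hpq)) h1 h2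

lemma zd_card1 (p q : ℕ) (hp : p.Prime) (hq : q.Prime) (hpq : p ≠ q) :
    ((Finset.range (p^2*q)).filter (fun k => p ∣ k ∧ ¬ p^2 ∣ k ∧ ¬ q ∣ k)).card
      = (p-1)*(q-1) := by
  have h1 : ((Finset.range (p^2*q)).filter (fun k => p ∣ k ∧ ¬ p^2 ∣ k ∧ ¬ q ∣ k))
      = ((Finset.range (p^2*q)).filter
          (fun k => (p ∣ k ∧ ¬ q ∣ k) ∧ ¬ (p^2 ∣ k ∧ ¬ q ∣ k))) := by
    apply Finset.filter_congr
    intro k _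
    constructor
    · rintro ⟨ha, hb, hc⟩; exact ⟨⟨ha, hc⟩, fun h => hb h.1⟩
    · rintro ⟨⟨ha, hc⟩, hb⟩
      exact ⟨ha, fun h2 => hb ⟨h2, hc⟩, hc⟩
  have hA : ((Finset.range (p^2*q)).filter (fun k => p ∣ k ∧ ¬ q ∣ k)).card
      = p*q - p := by
    have h2 : ((Finset.range (p^2*q)).filter (fun k => p ∣ k ∧ ¬ q ∣ k))
        = ((Finset.range (p^2*q)).filter (fun k => p ∣ k ∧ ¬ (p*q ∣ k))) := by
      apply Finset.filter_congr
      intro k _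
      constructor
      · rintro ⟨ha, hc⟩
        exact ⟨ha, fun h => hc (dvd_trans (Dvd.intro_left p rfl) h)⟩
      · rintro ⟨ha, hc⟩
        exact ⟨ha, fun h => hc (zd_pq_dvd hp hq hpq ha h)⟩
    rw [h2, zd_card_filter_and_not (A := fun k => p ∣ k) (B := fun k => p*q ∣ k)
        (fun k h => dvd_trans (Dvd.intro q rfl) h),
      zd_cnt_p p q hp, zd_cnt_pq p q hp hq]
  have hB : ((Finset.range (p^2*q)).filter (fun k => p^2 ∣ k ∧ ¬ q ∣ k)).card
      = q - 1 := by
    have h2 : ((Finset.range (p^2*q)).filter (fun k => p^2 ∣ k ∧ ¬ q ∣ k))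
        = ((Finset.range (p^2*q)).filter (fun k => p^2 ∣ k ∧ ¬ (p^2*q ∣ k))) := by
      apply Finset.filter_congr
      intro k _
      constructor
      · rintro ⟨ha, hc⟩
        exact ⟨ha, fun h => hc (dvd_trans (Dvd.intro_left _ rfl) h)⟩
      · rintro ⟨ha, hc⟩
        exact ⟨ha, fun h => hc (zd_ppq_dvd hp hq hpq ha h)⟩
    rw [h2, zd_card_filter_and_not (A := fun k => p^2 ∣ k) (B := fun k => p^2*q ∣ k)
        (fun k h => dvd_trans (Dvd.intro q rfl) h),
      zd_cnt_pp p q hp, zd_cnt_ppq p q hp hq]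
  rw [h1, zd_card_filter_and_not (A := fun k => p ∣ k ∧ ¬ q ∣ k)
      (B := fun k => p^2 ∣ k ∧ ¬ q ∣ k)
      (fun k h => ⟨dvd_trans (dvd_pow_self p two_ne_zero) h.1, h.2⟩), hA, hB]
  have h2p := hp.two_le
  have h2q := hq.two_le
  obtain ⟨a, rfl⟩ : ∃ a, p = a + 1 := ⟨p - 1, by omega⟩
  obtain ⟨b, rfl⟩ : ∃ b, q = b + 1 := ⟨q - 1, by omega⟩
  have hexp : (a+1)*(b+1) = a*b + a + b + 1 := by ring
  simp only [Nat.add_sub_cancel]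
  omega

lemma zd_card2 (p q : ℕ) (hp : p.Prime) (hq : q.Prime) (hpq : p ≠ q) :
    ((Finset.range (p^2*q)).filter (fun k => p^2 ∣ k ∧ ¬ q ∣ k)).card = q - 1 := by
  have h2 : ((Finset.range (p^2*q)).filter (fun k => p^2 ∣ k ∧ ¬ q ∣ k))
      = ((Finset.range (p^2*q)).filter (fun k => p^2 ∣ k ∧ ¬ (p^2*q ∣ k))) := by
    apply Finset.filter_congr
    intro k _
    constructor
    · rintro ⟨ha, hc⟩
      exact ⟨ha, fun h => hc (dvd_trans (Dvd.intro_left _ rfl) h)⟩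
    · rintro ⟨ha, hc⟩
      exact ⟨ha, fun h => hc (zd_ppq_dvd hp hq hpq ha h)⟩
  rw [h2, zd_card_filter_and_not (A := fun k => p^2 ∣ k) (B := fun k => p^2*q ∣ k)
      (fun k h => dvd_trans (Dvd.intro q rfl) h),
    zd_cnt_pp p q hp, zd_cnt_ppq p q hp hq]

lemma zd_card3 (p q : ℕ) (hp : p.Prime) (hq : q.Prime) (hpq : p ≠ q) :
    ((Finset.range (p^2*q)).filter (fun k => ¬ p ∣ k ∧ q ∣ k)).card = p^2 - p := by
  have h2 : ((Finset.range (p^2*q)).filter (fun k => ¬ p ∣ k ∧ q ∣ k))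
      = ((Finset.range (p^2*q)).filter (fun k => q ∣ k ∧ ¬ (p*q ∣ k))) := by
    apply Finset.filter_congr
    intro k _
    constructor
    · rintro ⟨ha, hc⟩
      exact ⟨hc, fun h => ha (dvd_trans (Dvd.intro q rfl) h)⟩
    · rintro ⟨hc, ha⟩
      exact ⟨fun h => ha (zd_pq_dvd hp hq hpq h hc), hc⟩
  rw [h2, zd_card_filter_and_not (A := fun k => q ∣ k) (B := fun k => p*q ∣ k)
      (fun k h => dvd_trans (Dvd.intro_left p rfl) h),
    zd_cnt_q p q hq, zd_cnt_pq p q hp hq]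

lemma zd_card4 (p q : ℕ) (hp : p.Prime) (hq : q.Prime) (hpq : p ≠ q) :
    ((Finset.range (p^2*q)).filter (fun k => p ∣ k ∧ ¬ p^2 ∣ k ∧ q ∣ k)).card = p - 1 := by
  have h2 : ((Finset.range (p^2*q)).filter (fun k => p ∣ k ∧ ¬ p^2 ∣ k ∧ q ∣ k))
      = ((Finset.range (p^2*q)).filter (fun k => p*q ∣ k ∧ ¬ (p^2*q ∣ k))) := by
    apply Finset.filter_congr
    intro k _
    constructor
    · rintro ⟨ha, hb, hc⟩
      refine ⟨zd_pq_dvd hp hq hpq ha hc, fun h => hb (dvd_trans ⟨q, by ring⟩ h)⟩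
    · rintro ⟨ha, hb⟩
      have hpk : p ∣ k := dvd_trans (Dvd.intro q rfl) ha
      have hqk : q ∣ k := dvd_trans (Dvd.intro_left p rfl) ha
      exact ⟨hpk, fun h => hb (zd_ppq_dvd hp hq hpq h hqk), hqk⟩
  rw [h2, zd_card_filter_and_not (A := fun k => p*q ∣ k) (B := fun k => p^2*q ∣ k)
      (fun k h => dvd_trans ⟨p, by ring⟩ h),
    zd_cnt_pq p q hp hq, zd_cnt_ppq p q hp hq]

lemma zd_sq_dvd_mul {p a b : ℕ} (hp : p.Prime) (h : p^2 ∣ a*b) :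
    p^2 ∣ a ∨ p^2 ∣ b ∨ (p ∣ a ∧ p ∣ b) := by
  by_cases ha : p ∣ a
  · by_cases hb : p ∣ b
    · exact Or.inr (Or.inr ⟨ha, hb⟩)
    · exact Or.inl (Nat.Coprime.dvd_of_dvd_mul_right
        (Nat.Coprime.pow_left 2 (hp.coprime_iff_not_dvd.mpr hb)) h)
  · exact Or.inr (Or.inl (Nat.Coprime.dvd_of_dvd_mul_left
      (Nat.Coprime.pow_left 2 (hp.coprime_iff_not_dvd.mpr ha)) h))



lemma zd_vertex_of (p q : ℕ) (k m : ℕ) [NeZero (p^2*q)]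
    (hknd : ¬ p^2*q ∣ k) (hm0 : 0 < m) (hmlt : m < p^2*q) (hdvd : p^2*q ∣ k*m) :
    (k : ZMod (p^2*q)) ≠ 0 ∧ ∃ y ≠ 0, (k : ZMod (p^2*q)) * y = 0 := by
  refine ⟨?_, (m : ZMod (p^2*q)), ?_, ?_⟩
  · rw [Ne, ZMod.natCast_eq_zero_iff]
    exact hknd
  · rw [Ne, ZMod.natCast_eq_zero_iff]
    exact fun h => absurd (Nat.le_of_dvd hm0 h) (by omega)
  · rw [← Nat.cast_mul, ZMod.natCast_eq_zero_iff]
    exact hdvd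

lemma zd_card_transfer (p q : ℕ) [NeZero (p^2*q)]
    (P : ℕ → Prop) [DecidablePred P] (hP0 : ¬ P 0)
    (hPv : ∀ k, 0 < k → k < p^2*q → P k → ∃ m, 0 < m ∧ m < p^2*q ∧ p^2*q ∣ k * m) :
    ((Finset.univ : Finset {x : ZMod (p^2*q) // x ≠ 0 ∧ ∃ y ≠ 0, x * y = 0}).filter
        (fun x => P x.1.val)).card
      = ((Finset.range (p^2*q)).filter P).card := by
  refine Finset.card_bij
    (fun (x : {x : ZMod (p^2*q) // x ≠ 0 ∧ ∃ y ≠ 0, x * y = 0}) _ => x.1.val) ?_ ?_ ?_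
  · intro x hx
    rw [Finset.mem_filter] at hx
    simp only [Finset.mem_filter, Finset.mem_range]
    exact ⟨ZMod.val_lt _, hx.2⟩
  · intro x _ y _ h
    have h' : x.1.val = y.1.val := h
    exact Subtype.ext (ZMod.val_injective (p^2*q) h')
  · intro k hk
    simp only [Finset.mem_filter, Finset.mem_range] at hk
    obtain ⟨hklt, hkP⟩ := hk
    have hk0 : 0 < k := by
      rcases Nat.eq_zero_or_pos k with h | h
      · exact absurd (h ▸ hkP) hP0
      · exact h
    obtain ⟨m, hm0, hmlt, hdvd⟩ := hPv k hk0 hklt hkP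
    have hknd : ¬ p^2*q ∣ k := fun h => absurd (Nat.le_of_dvd hk0 h) (by omega)
    have hzval : ((k : ZMod (p^2*q))).val = k := ZMod.val_cast_of_lt hklt
    refine ⟨⟨(k : ZMod (p^2*q)), zd_vertex_of p q k m hknd hm0 hmlt hdvd⟩, ?_, hzval⟩
    rw [Finset.mem_filter]
    refine ⟨Finset.mem_univ _, ?_⟩
    show P (ZMod.val (k : ZMod (p^2*q)))
    rw [hzval]
    exact hkP



/-- Every nonzero eigenvalue `μ` of the adjacency matrix of `Γ(ZMod (p^2 q))` satisfies
`μ^4 - (p-1)μ^3 - 2p(p-1)(q-1)μ^2 + p(p-1)^2(q-1)μ + p(p-1)^3(q-1)^2 = 0`. -/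
theorem nonzero_eigenvalue_quartic_zd_graph_p_sq_q (p q : ℕ) [Fact p.Prime] [Fact q.Prime]
    (hpq : p ≠ q) (μ : ℝ) (hμ : μ ≠ 0)
    (v : {x : ZMod (p ^ 2 * q) // x ≠ 0 ∧ ∃ y ≠ 0, x * y = 0} → ℝ) (hv : v ≠ 0)
    (hev : (zdAdjMatrix (p ^ 2 * q)).mulVec v = μ • v) :
    μ ^ 4 - ((p : ℝ) - 1) * μ ^ 3 - 2 * p * ((p : ℝ) - 1) * ((q : ℝ) - 1) * μ ^ 2 +
      p * ((p : ℝ) - 1) ^ 2 * ((q : ℝ) - 1) * μ +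
      p * ((p : ℝ) - 1) ^ 3 * ((q : ℝ) - 1) ^ 2 = 0 := by
  classical
  have hp := (Fact.out : p.Prime)
  have hq := (Fact.out : q.Prime)
  have h2p := hp.two_le
  have h2q := hq.two_le
  have hNpos : 0 < p^2*q := by positivity
  haveI : NeZero (p^2*q) := ⟨hNpos.ne'⟩
  have hpp4 : 4 ≤ p*p := Nat.mul_le_mul h2p h2p
  have hp2sq : p^2 = p*p := sq p
  have hpp2 : 2*p ≤ p*p := Nat.mul_le_mul_right p h2p
  have hltq : q < p^2*q := by
    have := mul_lt_mul_of_pos_right (show 1 < p^2 by omega) hq.pos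
    simpa using this
  have hltpq : p*q < p^2*q := by
    exact mul_lt_mul_of_pos_right (show p < p^2 by omega) hq.pos
  have hltpp : p^2 < p^2*q := by
    have := mul_lt_mul_of_pos_left (show 1 < q by omega) (show (0:ℕ) < p^2 by positivity)
    simpa using this
  -- basic ZMod facts
  have hcastval : ∀ x : ZMod (p^2*q), ((x.val : ℕ) : ZMod (p^2*q)) = x := fun x =>
    ZMod.natCast_rightInverse x
  have hmulzero : ∀ x y : ZMod (p^2*q), x * y = 0 ↔ p^2*q ∣ x.val * y.val := by
    intro x y
    rw [← hcastval x, ← hcastval y, ← Nat.cast_mul, ZMod.natCast_eq_zero_iff,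
      ZMod.val_cast_of_lt (ZMod.val_lt x), ZMod.val_cast_of_lt (ZMod.val_lt y)]
  have hvalne : ∀ x : ZMod (p^2*q), x ≠ 0 → x.val ≠ 0 := fun x hx h =>
    hx ((ZMod.val_eq_zero x).mp h)
  -- no vertex has both p^2 and q dividing its value
  have hvne : ∀ x : {x : ZMod (p ^ 2 * q) // x ≠ 0 ∧ ∃ y ≠ 0, x * y = 0}, ¬ (p^2 ∣ x.1.val ∧ q ∣ x.1.val) := by
    rintro x ⟨h1, h2⟩
    have hd : p^2*q ∣ x.1.val := zd_ppq_dvd hp hq hpq h1 h2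
    have := Nat.le_of_dvd (Nat.pos_of_ne_zero (hvalne _ x.2.1)) hd
    have := ZMod.val_lt x.1
    omega
  -- exhaustive classification of vertices
  have hclass : ∀ x : {x : ZMod (p ^ 2 * q) // x ≠ 0 ∧ ∃ y ≠ 0, x * y = 0},
      (p ∣ x.1.val ∧ ¬ p^2 ∣ x.1.val ∧ ¬ q ∣ x.1.val) ∨
      (p^2 ∣ x.1.val ∧ ¬ q ∣ x.1.val) ∨
      (¬ p ∣ x.1.val ∧ q ∣ x.1.val) ∨
      (p ∣ x.1.val ∧ ¬ p^2 ∣ x.1.val ∧ q ∣ x.1.val) := by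
    intro x
    by_cases hdp : p ∣ x.1.val
    · by_cases hdpp : p^2 ∣ x.1.val
      · have hnq : ¬ q ∣ x.1.val := fun h => hvne x ⟨hdpp, h⟩
        exact Or.inr (Or.inl ⟨hdpp, hnq⟩)
      · by_cases hdq : q ∣ x.1.val
        · exact Or.inr (Or.inr (Or.inr ⟨hdp, hdpp, hdq⟩))
        · exact Or.inl ⟨hdp, hdpp, hdq⟩
    · by_cases hdq : q ∣ x.1.val
      · exact Or.inr (Or.inr (Or.inl ⟨hdp, hdq⟩))
      · -- x is a unit : contradiction with being a zero divisor
        exfalso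
        have hco : Nat.Coprime x.1.val (p^2*q) :=
          Nat.Coprime.mul_right
            (Nat.Coprime.pow_right 2 (Nat.coprime_comm.mp (hp.coprime_iff_not_dvd.mpr hdp)))
            (Nat.coprime_comm.mp (hq.coprime_iff_not_dvd.mpr hdq))
        have hu : IsUnit x.1 := by
          rw [← hcastval x.1]
          exact (ZMod.isUnit_iff_coprime _ _).mpr hco
        obtain ⟨y, hy0, hxy⟩ := x.2.2
        exact hy0 ((IsUnit.mul_right_eq_zero hu).mp hxy)
  -- adjacency criteria per class
  have hadj1 : ∀ x y : {x : ZMod (p ^ 2 * q) // x ≠ 0 ∧ ∃ y ≠ 0, x * y = 0}, (p ∣ x.1.val ∧ ¬ p^2 ∣ x.1.val ∧ ¬ q ∣ x.1.val) →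
      (x.1 * y.1 = 0 ↔ (p ∣ y.1.val ∧ ¬ p^2 ∣ y.1.val ∧ q ∣ y.1.val)) := by
    rintro x y ⟨hxp, hxpp, hxq⟩
    rw [hmulzero]
    constructor
    · intro h
      have hqd : q ∣ x.1.val * y.1.val := dvd_trans ⟨p^2, by ring⟩ h
      have hqy : q ∣ y.1.val := ((Nat.Prime.dvd_mul hq).mp hqd).resolve_left hxq
      have hppd : p^2 ∣ x.1.val * y.1.val := dvd_trans ⟨q, rfl⟩ h
      have hypp : ¬ p^2 ∣ y.1.val := fun hc => hvne y ⟨hc, hqy⟩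
      rcases zd_sq_dvd_mul hp hppd with h' | h' | h'
      · exact absurd h' hxpp
      · exact absurd h' hypp
      · exact ⟨h'.2, hypp, hqy⟩
    · rintro ⟨hyp, hypp, hyq⟩
      refine zd_ppq_dvd hp hq hpq ?_ (Dvd.dvd.mul_left hyq _)
      obtain ⟨a, ha⟩ := hxp
      obtain ⟨b, hb⟩ := hyp
      exact ⟨a*b, by rw [ha, hb]; ring⟩
  have hadj2 : ∀ x y : {x : ZMod (p ^ 2 * q) // x ≠ 0 ∧ ∃ y ≠ 0, x * y = 0}, (p^2 ∣ x.1.val ∧ ¬ q ∣ x.1.val) →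
      (x.1 * y.1 = 0 ↔ q ∣ y.1.val) := by
    rintro x y ⟨hxpp, hxq⟩
    rw [hmulzero]
    constructor
    · intro h
      have hqd : q ∣ x.1.val * y.1.val := dvd_trans ⟨p^2, by ring⟩ h
      exact ((Nat.Prime.dvd_mul hq).mp hqd).resolve_left hxq
    · intro hyq
      exact zd_ppq_dvd hp hq hpq (Dvd.dvd.mul_right hxpp _) (Dvd.dvd.mul_left hyq _)
  have hadj3 : ∀ x y : {x : ZMod (p ^ 2 * q) // x ≠ 0 ∧ ∃ y ≠ 0, x * y = 0}, (¬ p ∣ x.1.val ∧ q ∣ x.1.val) →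
      (x.1 * y.1 = 0 ↔ p^2 ∣ y.1.val) := by
    rintro x y ⟨hxp, hxq⟩
    rw [hmulzero]
    constructor
    · intro h
      have hppd : p^2 ∣ x.1.val * y.1.val := dvd_trans ⟨q, rfl⟩ h
      rcases zd_sq_dvd_mul hp hppd with h' | h' | h'
      · exact absurd (dvd_trans (dvd_pow_self p two_ne_zero) h') hxp
      · exact h'
      · exact absurd h'.1 hxp
    · intro hypp
      exact zd_ppq_dvd hp hq hpq (Dvd.dvd.mul_left hypp _) (Dvd.dvd.mul_right hxq _)
  have hadj4 : ∀ x y : {x : ZMod (p ^ 2 * q) // x ≠ 0 ∧ ∃ y ≠ 0, x * y = 0}, (p ∣ x.1.val ∧ ¬ p^2 ∣ x.1.val ∧ q ∣ x.1.val) →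
      (x.1 * y.1 = 0 ↔ p ∣ y.1.val) := by
    rintro x y ⟨hxp, hxpp, hxq⟩
    rw [hmulzero]
    constructor
    · intro h
      have hppd : p^2 ∣ x.1.val * y.1.val := dvd_trans ⟨q, rfl⟩ h
      rcases zd_sq_dvd_mul hp hppd with h' | h' | h'
      · exact absurd h' hxpp
      · exact dvd_trans (dvd_pow_self p two_ne_zero) h'
      · exact h'.2
    · intro hyp
      refine zd_ppq_dvd hp hq hpq ?_ (Dvd.dvd.mul_right hxq _)
      obtain ⟨a, ha⟩ := hxp
      obtain ⟨b, hb⟩ := hyp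
      exact ⟨a*b, by rw [ha, hb]; ring⟩
  -- membership translations for target classes
  have hmem_q : ∀ y : {x : ZMod (p ^ 2 * q) // x ≠ 0 ∧ ∃ y ≠ 0, x * y = 0}, q ∣ y.1.val ↔
      ((¬ p ∣ y.1.val ∧ q ∣ y.1.val) ∨ (p ∣ y.1.val ∧ ¬ p^2 ∣ y.1.val ∧ q ∣ y.1.val)) := by
    intro y
    constructor
    · intro h
      by_cases hyp : p ∣ y.1.val
      · have hypp : ¬ p^2 ∣ y.1.val := fun hc => hvne y ⟨hc, h⟩
        exact Or.inr ⟨hyp, hypp, h⟩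
      · exact Or.inl ⟨hyp, h⟩
    · rintro (⟨_, h⟩ | ⟨_, _, h⟩) <;> exact h
  have hmem_pp : ∀ y : {x : ZMod (p ^ 2 * q) // x ≠ 0 ∧ ∃ y ≠ 0, x * y = 0}, p^2 ∣ y.1.val ↔ (p^2 ∣ y.1.val ∧ ¬ q ∣ y.1.val) := by
    intro y
    constructor
    · intro h
      exact ⟨h, fun hc => hvne y ⟨h, hc⟩⟩
    · exact fun h => h.1
  have hmem_p : ∀ y : {x : ZMod (p ^ 2 * q) // x ≠ 0 ∧ ∃ y ≠ 0, x * y = 0}, p ∣ y.1.val ↔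
      ((p ∣ y.1.val ∧ ¬ p^2 ∣ y.1.val ∧ ¬ q ∣ y.1.val) ∨ (p^2 ∣ y.1.val ∧ ¬ q ∣ y.1.val) ∨
        (p ∣ y.1.val ∧ ¬ p^2 ∣ y.1.val ∧ q ∣ y.1.val)) := by
    intro y
    constructor
    · intro h
      by_cases hypp : p^2 ∣ y.1.val
      · exact Or.inr (Or.inl ⟨hypp, fun hc => hvne y ⟨hypp, hc⟩⟩)
      · by_cases hyq : q ∣ y.1.val
        · exact Or.inr (Or.inr ⟨h, hypp, hyq⟩)
        · exact Or.inl ⟨h, hypp, hyq⟩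
    · rintro (⟨h, _⟩ | ⟨h, _⟩ | ⟨h, _⟩)
      · exact h
      · exact dvd_trans (dvd_pow_self p two_ne_zero) h
      · exact h
  -- the class finsets and sums
  set F1 : Finset {x : ZMod (p ^ 2 * q) // x ≠ 0 ∧ ∃ y ≠ 0, x * y = 0} := Finset.univ.filter
    (fun x => p ∣ x.1.val ∧ ¬ p^2 ∣ x.1.val ∧ ¬ q ∣ x.1.val) with hF1
  set F2 : Finset {x : ZMod (p ^ 2 * q) // x ≠ 0 ∧ ∃ y ≠ 0, x * y = 0} := Finset.univ.filter (fun x => p^2 ∣ x.1.val ∧ ¬ q ∣ x.1.val) with hF2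
  set F3 : Finset {x : ZMod (p ^ 2 * q) // x ≠ 0 ∧ ∃ y ≠ 0, x * y = 0} := Finset.univ.filter (fun x => ¬ p ∣ x.1.val ∧ q ∣ x.1.val) with hF3
  set F4 : Finset {x : ZMod (p ^ 2 * q) // x ≠ 0 ∧ ∃ y ≠ 0, x * y = 0} := Finset.univ.filter
    (fun x => p ∣ x.1.val ∧ ¬ p^2 ∣ x.1.val ∧ q ∣ x.1.val) with hF4
  set T1 : ℝ := ∑ y ∈ F1, v y with hT1
  set T2 : ℝ := ∑ y ∈ F2, v y with hT2
  set T3 : ℝ := ∑ y ∈ F3, v y with hT3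
  set T4 : ℝ := ∑ y ∈ F4, v y with hT4
  -- the eigenvalue equation, pointwise
  have key : ∀ x : {x : ZMod (p ^ 2 * q) // x ≠ 0 ∧ ∃ y ≠ 0, x * y = 0}, ∑ y : {x : ZMod (p ^ 2 * q) // x ≠ 0 ∧ ∃ y ≠ 0, x * y = 0}, (if x.1 * y.1 = 0 then v y else 0) = μ * v x := by
    intro x
    have h := congrFun hev x
    simp only [Matrix.mulVec, dotProduct, zdAdjMatrix, Pi.smul_apply,
      smul_eq_mul, ite_mul, one_mul, zero_mul] at h
    exact h
  -- pointwise sums per class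
  have hsum1 : ∀ x : {x : ZMod (p ^ 2 * q) // x ≠ 0 ∧ ∃ y ≠ 0, x * y = 0}, (p ∣ x.1.val ∧ ¬ p^2 ∣ x.1.val ∧ ¬ q ∣ x.1.val) →
      μ * v x = T4 := by
    intro x hx
    rw [← key x, hT4, hF4, ← Finset.sum_filter]
    apply Finset.sum_congr
    · apply Finset.filter_congr
      intro y _
      exact hadj1 x y hx
    · intro y _; rfl
  have hsum2 : ∀ x : {x : ZMod (p ^ 2 * q) // x ≠ 0 ∧ ∃ y ≠ 0, x * y = 0}, (p^2 ∣ x.1.val ∧ ¬ q ∣ x.1.val) → μ * v x = T3 + T4 := by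
    intro x hx
    rw [← key x]
    have h1 : ∀ y : {x : ZMod (p ^ 2 * q) // x ≠ 0 ∧ ∃ y ≠ 0, x * y = 0}, (if x.1 * y.1 = 0 then v y else 0) =
        (if (¬ p ∣ y.1.val ∧ q ∣ y.1.val) then v y else 0) +
        (if (p ∣ y.1.val ∧ ¬ p^2 ∣ y.1.val ∧ q ∣ y.1.val) then v y else 0) := by
      intro y
      rw [if_congr ((hadj2 x y hx).trans (hmem_q y)) rfl rfl]
      by_cases h3 : (¬ p ∣ y.1.val ∧ q ∣ y.1.val) <;>
        by_cases h4 : (p ∣ y.1.val ∧ ¬ p^2 ∣ y.1.val ∧ q ∣ y.1.val) <;>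
        simp [h3, h4]
    rw [Finset.sum_congr rfl (fun y _ => h1 y), Finset.sum_add_distrib,
      hT3, hT4, hF3, hF4, ← Finset.sum_filter, ← Finset.sum_filter]
  have hsum3 : ∀ x : {x : ZMod (p ^ 2 * q) // x ≠ 0 ∧ ∃ y ≠ 0, x * y = 0}, (¬ p ∣ x.1.val ∧ q ∣ x.1.val) → μ * v x = T2 := by
    intro x hx
    rw [← key x, hT2, hF2, ← Finset.sum_filter]
    apply Finset.sum_congr
    · apply Finset.filter_congr
      intro y _
      exact (hadj3 x y hx).trans (hmem_pp y)
    · intro y _; rfl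
  have hsum4 : ∀ x : {x : ZMod (p ^ 2 * q) // x ≠ 0 ∧ ∃ y ≠ 0, x * y = 0}, (p ∣ x.1.val ∧ ¬ p^2 ∣ x.1.val ∧ q ∣ x.1.val) →
      μ * v x = T1 + T2 + T4 := by
    intro x hx
    rw [← key x]
    have h1 : ∀ y : {x : ZMod (p ^ 2 * q) // x ≠ 0 ∧ ∃ y ≠ 0, x * y = 0}, (if x.1 * y.1 = 0 then v y else 0) =
        ((if (p ∣ y.1.val ∧ ¬ p^2 ∣ y.1.val ∧ ¬ q ∣ y.1.val) then v y else 0) +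
         (if (p^2 ∣ y.1.val ∧ ¬ q ∣ y.1.val) then v y else 0)) +
        (if (p ∣ y.1.val ∧ ¬ p^2 ∣ y.1.val ∧ q ∣ y.1.val) then v y else 0) := by
      intro y
      rw [if_congr ((hadj4 x y hx).trans (hmem_p y)) rfl rfl]
      by_cases h1' : (p ∣ y.1.val ∧ ¬ p^2 ∣ y.1.val ∧ ¬ q ∣ y.1.val) <;>
        by_cases h2' : (p^2 ∣ y.1.val ∧ ¬ q ∣ y.1.val) <;>
        by_cases h4' : (p ∣ y.1.val ∧ ¬ p^2 ∣ y.1.val ∧ q ∣ y.1.val) <;>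
        simp [h1', h2', h4']
    rw [Finset.sum_congr rfl (fun y _ => h1 y), Finset.sum_add_distrib,
      Finset.sum_add_distrib, hT1, hT2, hT4, hF1, hF2, hF4,
      ← Finset.sum_filter, ← Finset.sum_filter, ← Finset.sum_filter]
  -- cardinalities
  have hcard1 : (F1.card : ℝ) = ((p:ℝ)-1) * ((q:ℝ)-1) := by
    rw [hF1, zd_card_transfer p q (fun k => p ∣ k ∧ ¬ p^2 ∣ k ∧ ¬ q ∣ k)
        (fun h => h.2.1 (dvd_zero _))
        (fun k hk0 hklt hk => ⟨p*q, by positivity, hltpq, by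
          obtain ⟨a, ha⟩ := hk.1
          exact ⟨a, by rw [ha]; ring⟩⟩),
      zd_card1 p q hp hq hpq]
    rw [Nat.cast_mul, Nat.cast_sub (by omega : 1 ≤ p), Nat.cast_sub (by omega : 1 ≤ q)]
    push_cast
    ring
  have hcard2 : (F2.card : ℝ) = ((q:ℝ)-1) := by
    rw [hF2, zd_card_transfer p q (fun k => p^2 ∣ k ∧ ¬ q ∣ k)
        (fun h => h.2 (dvd_zero _))
        (fun k hk0 hklt hk => ⟨q, by positivity, hltq, by
          obtain ⟨a, ha⟩ := hk.1
          exact ⟨a, by rw [ha]; ring⟩⟩),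
      zd_card2 p q hp hq hpq]
    rw [Nat.cast_sub (by omega : 1 ≤ q)]
    push_cast
    ring
  have hcard3 : (F3.card : ℝ) = (p:ℝ) * ((p:ℝ)-1) := by
    rw [hF3, zd_card_transfer p q (fun k => ¬ p ∣ k ∧ q ∣ k)
        (fun h => h.1 (dvd_zero _))
        (fun k hk0 hklt hk => ⟨p^2, by positivity, hltpp, by
          obtain ⟨a, ha⟩ := hk.2
          exact ⟨a, by rw [ha]; ring⟩⟩),
      zd_card3 p q hp hq hpq]
    rw [Nat.cast_sub (by omega : p ≤ p^2)]
    push_cast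
    ring
  have hcard4 : (F4.card : ℝ) = ((p:ℝ)-1) := by
    rw [hF4, zd_card_transfer p q (fun k => p ∣ k ∧ ¬ p^2 ∣ k ∧ q ∣ k)
        (fun h => h.2.1 (dvd_zero _))
        (fun k hk0 hklt hk => ⟨p*q, by positivity, hltpq, by
          obtain ⟨a, ha⟩ := hk.1
          exact ⟨a, by rw [ha]; ring⟩⟩),
      zd_card4 p q hp hq hpq]
    rw [Nat.cast_sub (by omega : 1 ≤ p)]
    push_cast
    ring
  -- summed equations
  have he1 : μ * T1 = (((p:ℝ)-1) * ((q:ℝ)-1)) * T4 := by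
    rw [hT1, Finset.mul_sum, Finset.sum_congr rfl
      (fun x hx => hsum1 x (Finset.mem_filter.mp hx).2),
      Finset.sum_const, nsmul_eq_mul, hcard1]
  have he2 : μ * T2 = ((q:ℝ)-1) * (T3 + T4) := by
    rw [hT2, Finset.mul_sum, Finset.sum_congr rfl
      (fun x hx => hsum2 x (Finset.mem_filter.mp hx).2),
      Finset.sum_const, nsmul_eq_mul, hcard2]
  have he3 : μ * T3 = ((p:ℝ) * ((p:ℝ)-1)) * T2 := by
    rw [hT3, Finset.mul_sum, Finset.sum_congr rfl
      (fun x hx => hsum3 x (Finset.mem_filter.mp hx).2),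
      Finset.sum_const, nsmul_eq_mul, hcard3]
  have he4 : μ * T4 = ((p:ℝ)-1) * (T1 + T2 + T4) := by
    rw [hT4, Finset.mul_sum, Finset.sum_congr rfl
      (fun x hx => hsum4 x (Finset.mem_filter.mp hx).2),
      Finset.sum_const, nsmul_eq_mul, hcard4]
  -- not all T's vanish
  have hTne : ¬ (T1 = 0 ∧ T2 = 0 ∧ T3 = 0 ∧ T4 = 0) := by
    rintro ⟨h1, h2, h3, h4⟩
    apply hv
    funext x
    have hx0 : μ * v x = 0 := by
      rcases hclass x with h | h | h | h
      · rw [hsum1 x h, h4]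
      · rw [hsum2 x h, h3, h4]; ring
      · rw [hsum3 x h, h2]
      · rw [hsum4 x h, h1, h2, h4]; ring
    have := mul_eq_zero.mp hx0
    simpa [hμ] using this
  have hA0 : ((p:ℝ)-1) ≠ 0 := by
    have : (2:ℝ) ≤ (p:ℝ) := by exact_mod_cast h2p
    linarith
  by_cases h4 : T4 = 0
  · exfalso
    have h1 : T1 = 0 := by
      have := he1
      rw [h4, mul_zero] at this
      exact (mul_eq_zero.mp this).resolve_left hμ
    have h2 : T2 = 0 := by
      have := he4
      rw [h4, h1, mul_zero] at this
      have h' : ((p:ℝ)-1) * T2 = 0 := by linarith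
      exact (mul_eq_zero.mp h').resolve_left hA0
    have h3 : T3 = 0 := by
      have := he3
      rw [h2, mul_zero] at this
      exact (mul_eq_zero.mp this).resolve_left hμ
    exact hTne ⟨h1, h2, h3, h4⟩
  · have E2 : (μ^2 - (p:ℝ)*((p:ℝ)-1)*((q:ℝ)-1)) * T2 = ((q:ℝ)-1)*μ*T4 := by
      linear_combination μ*he2 + ((q:ℝ)-1)*he3
    have E4 : (μ^2 - ((p:ℝ)-1)*μ - ((p:ℝ)-1)^2*((q:ℝ)-1)) * T4 = ((p:ℝ)-1)*μ*T2 := by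
      linear_combination μ*he4 + ((p:ℝ)-1)*he1
    have hfinal : (μ ^ 4 - ((p : ℝ) - 1) * μ ^ 3 -
        2 * p * ((p : ℝ) - 1) * ((q : ℝ) - 1) * μ ^ 2 +
        p * ((p : ℝ) - 1) ^ 2 * ((q : ℝ) - 1) * μ +
        p * ((p : ℝ) - 1) ^ 3 * ((q : ℝ) - 1) ^ 2) * T4 = 0 := by
      linear_combination (μ^2 - (p:ℝ)*((p:ℝ)-1)*((q:ℝ)-1)) * E4 + ((p:ℝ)-1)*μ * E2
    exact (mul_eq_zero.mp hfinal).resolve_right h4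
end

section
/- The rank of the adjacency matrix of Γ(Z/p^3 Z) is 2; equivalently, 0 is an eigenvalue with multiplicity p^2 − 3. -/
/-- The block matrix `[[O, J], [Jᵀ, J']]` of the adjacency matrix of `Γ(ZMod (p^3))`:
`O` is the `(p^2-p) × (p^2-p)` zero matrix, and the other blocks are all-ones. -/
noncomputable def zdBlockMatrix (p : ℕ) :
    Matrix (Fin (p ^ 2 - p) ⊕ Fin (p - 1)) (Fin (p ^ 2 - p) ⊕ Fin (p - 1)) ℝ :=
  Matrix.fromBlocks 0 (Matrix.of fun _ _ => 1) (Matrix.of fun _ _ => 1)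
    (Matrix.of fun _ _ => 1)

open Matrix in
/-- The rank of the adjacency matrix of `Γ(ZMod (p^3))` is `2`; equivalently, `0` is an
eigenvalue of multiplicity `p^2 - 3` (the kernel has dimension `p^2 - 3`). -/
theorem rank_zd_block_matrix (p : ℕ) (hp : p.Prime) :
    (zdBlockMatrix p).rank = 2 ∧
    Module.finrank ℝ (LinearMap.ker (zdBlockMatrix p).mulVecLin) = p ^ 2 - 3 := by
  have hp2 := hp.two_le
  have hpp : p < p ^ 2 := by nlinarith
  have ha : 0 < p ^ 2 - p := by omega
  have hb : 0 < p - 1 := by omega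
  set ι := Fin (p ^ 2 - p) ⊕ Fin (p - 1)
  set χ : ι → ℝ := Sum.elim (fun _ => (1:ℝ)) (fun _ => 0) with hχ
  -- upper bound: factor as a product through `Fin 2`
  set B : Matrix ι (Fin 2) ℝ := Matrix.of fun i k => if k = 0 then 1 else χ i with hB
  set C : Matrix (Fin 2) ι ℝ := Matrix.of fun k j => if k = 0 then 1 else -χ j with hC
  have hfac : zdBlockMatrix p = B * C := by
    ext i j
    rcases i with i | i <;> rcases j with j | j <;>
      simp [zdBlockMatrix, hB, hC, hχ, Matrix.mul_apply, Fin.sum_univ_two, Matrix.fromBlocks]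
  have hle : (zdBlockMatrix p).rank ≤ 2 := by
    rw [hfac]
    calc (B * C).rank ≤ C.rank := Matrix.rank_mul_le_right B C
    _ ≤ Fintype.card (Fin 2) := Matrix.rank_le_card_height C
    _ = 2 := by simp
  -- lower bound: an invertible 2×2 submatrix
  set i0 : ι := Sum.inl ⟨0, ha⟩
  set j0 : ι := Sum.inr ⟨0, hb⟩
  set f : Fin 2 → ι := ![i0, j0] with hf
  set D : Matrix (Fin 2) ι ℝ := Matrix.of fun k i => if i = f k then 1 else 0 with hD
  set E : Matrix ι (Fin 2) ℝ := Matrix.of fun i k => if i = f k then 1 else 0 with hE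
  have hME : ∀ i l, (zdBlockMatrix p * E) i l = zdBlockMatrix p i (f l) := by
    intro i l
    simp [Matrix.mul_apply, hE, mul_ite, mul_one, mul_zero, Finset.sum_ite_eq']
  have hDME : D * zdBlockMatrix p * E = !![0, 1; 1, 1] := by
    have key : ∀ k l, (D * zdBlockMatrix p * E) k l = zdBlockMatrix p (f k) (f l) := by
      intro k l
      rw [Matrix.mul_assoc, Matrix.mul_apply]
      simp only [hME]
      simp [hD, Finset.sum_ite_eq']
    ext k l
    rw [key]
    fin_cases k <;> fin_cases l <;> simp [hf, zdBlockMatrix, i0, j0]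
  have hge : 2 ≤ (zdBlockMatrix p).rank := by
    have h2 : (D * zdBlockMatrix p * E).rank = 2 := by
      rw [hDME, Matrix.rank_of_isUnit]
      · simp
      · rw [Matrix.isUnit_iff_isUnit_det]
        simp [Matrix.det_fin_two_of]
    calc 2 = (D * zdBlockMatrix p * E).rank := h2.symm
    _ ≤ (D * zdBlockMatrix p).rank := Matrix.rank_mul_le_left _ _
    _ ≤ (zdBlockMatrix p).rank := Matrix.rank_mul_le_right _ _
  have hrank : (zdBlockMatrix p).rank = 2 := le_antisymm hle hge
  refine ⟨hrank, ?_⟩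
  have hrn := LinearMap.finrank_range_add_finrank_ker (zdBlockMatrix p).mulVecLin
  rw [show Module.finrank ℝ (LinearMap.range (zdBlockMatrix p).mulVecLin)
      = (zdBlockMatrix p).rank from rfl, hrank] at hrn
  have hdom : Module.finrank ℝ (ι → ℝ) = (p ^ 2 - p) + (p - 1) := by
    rw [Module.finrank_fintype_fun_eq_card]
    simp [ι]
  rw [hdom] at hrn
  omega
end
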